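/- arXiv:2510.01227 — 6 statements merged into one kernel-verified Lean document; each statement's English description precedes it below -/
import Mathlib

section
/- If n > 10 and for every integer k ≥ 2 with 2k² ≤ n the remainder n mod k² is odd, then there is no odd integer q ≥ 3 with 3q² ≤ n < 4q² (i.e., no odd square s with n/4 < s ≤ n/3). -/
theorem stmt_2 (n : ℕ) (hn : 10 < n)
    (h : ∀ k : ℕ, 2 ≤ k → 2 * k ^ 2 ≤ n → Odd (n % k ^ 2)) :
    ¬ ∃ q : ℕ, Odd q ∧ 3 ≤ q ∧ 3 * q ^ 2 ≤ n ∧ n < 4 * q ^ 2 := by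
  rintro ⟨q, hq, hq3, h3, h4⟩
  have hn2 : Odd (n % 2 ^ 2) := h 2 (by norm_num) (by omega)
  have hs : Odd (q ^ 2) := hq.pow
  have hq2 : Odd (n % q ^ 2) := h q (by omega) (by omega)
  have hmod : n % q ^ 2 = n - 3 * q ^ 2 := by
    have hlt : n - 3 * q ^ 2 < q ^ 2 := by omega
    have : n = q ^ 2 * 3 + (n - 3 * q ^ 2) := by omega
    calc n % q ^ 2 = (q ^ 2 * 3 + (n - 3 * q ^ 2)) % q ^ 2 := by rw [← this]
      _ = n - 3 * q ^ 2 := by rw [Nat.mul_add_mod, Nat.mod_eq_of_lt hlt]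
  rw [hmod] at hq2
  rw [Nat.odd_iff] at hn2 hs hq2
  simp only [show (2:ℕ)^2 = 4 from rfl] at hn2
  omega
end

section
/- The minimum number of edges in a simple graph on 9 vertices such that every 5-vertex subset contains at least 2 edges is 9. -/
open scoped Classical

/-- The number of edges of `G` with both endpoints in `S`. -/
noncomputable def edgesIn {n : ℕ} (G : SimpleGraph (Fin n)) (S : Finset (Fin n)) : ℕ :=
  (G.edgeFinset.filter (fun e => ∀ v ∈ e, v ∈ S)).card

/-- Every 5-vertex subset spans at least 2 edges. -/
def Spans2 {n : ℕ} (G : SimpleGraph (Fin n)) : Prop :=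
  ∀ S : Finset (Fin n), S.card = 5 → 2 ≤ edgesIn G S

/-!
If `G` has an independent set `I` of size 4, the five sets `I ∪ {v}` with `v ∉ I` each span
two edges, and no edge lies in two of them, so `G` has at least 10 edges. Otherwise the
complement of `G` is `K₄`-free, so by Turán's theorem it has at most `t(9, 3) = 27` of the 36
pairs, and `G` has at least 9 edges. The bound is attained by the complement of the Turán graph,
three disjoint triangles: among any five vertices two pairs lie in a common part, by pigeonhole
applied twice.
-/

namespace SimpleGraph

open Finset

theorem card_edgeFinset_add_card_edgeFinset_compl {V : Type*} [Fintype V] (G : SimpleGraph V)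
    [DecidableRel G.Adj] :
    #G.edgeFinset + #Gᶜ.edgeFinset = (Fintype.card V).choose 2 := by
  rw [← card_union_of_disjoint (disjoint_edgeFinset.2 disjoint_compl_right), ← edgeFinset_sup,
    ← card_edgeFinset_top_eq_card_choose_two]
  congr!
  exact sup_compl_eq_top

theorem IndepSetFree.choose_two_le {n r : ℕ} (hr : 0 < r) {G : SimpleGraph (Fin n)}
    [DecidableRel G.Adj] (hG : G.IndepSetFree (r + 1)) :
    n.choose 2 ≤ #G.edgeFinset + #(turanGraph n r).edgeFinset := by
  have hcompl : #Gᶜ.edgeFinset ≤ #(turanGraph n r).edgeFinset := by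
    convert (isTuranMaximal_turanGraph (n := n) hr).2 ((cliqueFree_compl G).2 hG)
  have hsum : #G.edgeFinset + #Gᶜ.edgeFinset = n.choose 2 := by
    convert card_edgeFinset_add_card_edgeFinset_compl G
    rw [Fintype.card_fin]
  omega

theorem card_edgeFinset_turanGraph_nine_three : #(turanGraph 9 3).edgeFinset = 27 := by
  rw [card_edgeFinset_turanGraph]
  rfl

theorem card_edgeFinset_compl_turanGraph_nine_three : #(turanGraph 9 3)ᶜ.edgeFinset = 9 := by
  have hsum : #(turanGraph 9 3).edgeFinset + #(turanGraph 9 3)ᶜ.edgeFinset = 36 := by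
    convert card_edgeFinset_add_card_edgeFinset_compl (turanGraph 9 3)
    simp [Nat.choose_two_right]
  rw [card_edgeFinset_turanGraph_nine_three] at hsum
  omega

end SimpleGraph

open Finset SimpleGraph

theorem edgesIn_eq_card_filter {n : ℕ} (G : SimpleGraph (Fin n)) [DecidableRel G.Adj]
    (S : Finset (Fin n)) : edgesIn G S = #{e ∈ G.edgeFinset | ∀ v ∈ e, v ∈ S} := by
  unfold edgesIn
  congr!

theorem sum_edgesIn_insert_le_card_edgeFinset {n : ℕ} (G : SimpleGraph (Fin n))
    {I : Finset (Fin n)} (hI : G.IsIndepSet I) :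
    ∑ v ∈ Iᶜ, edgesIn G (insert v I) ≤ #G.edgeFinset := by
  have hdisj : (↑Iᶜ : Set (Fin n)).PairwiseDisjoint
      fun v => G.edgeFinset.filter fun e => ∀ x ∈ e, x ∈ insert v I := by
    intro v hv w hw hvw
    simp only [coe_compl, Set.mem_compl_iff, mem_coe] at hv hw
    refine disjoint_left.2 fun e hev hew => ?_
    simp only [mem_filter, mem_edgeFinset] at hev hew
    induction e with
    | h a b =>
      have hmem : ∀ x ∈ s(a, b), x ∈ I := fun x hx => by
        have := hev.2 x hx
        have := hew.2 x hx
        grind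
      exact hI (hmem a (Sym2.mem_mk_left a b)) (hmem b (Sym2.mem_mk_right a b)) hev.1.ne hev.1
  calc ∑ v ∈ Iᶜ, edgesIn G (insert v I)
      = #(Iᶜ.biUnion fun v => G.edgeFinset.filter fun e => ∀ x ∈ e, x ∈ insert v I) :=
        (card_biUnion hdisj).symm
    _ ≤ #G.edgeFinset := card_le_card (biUnion_subset.2 fun _ _ => filter_subset _ _)

theorem Spans2.two_mul_sub_four_le {n : ℕ} {G : SimpleGraph (Fin n)} (hG : Spans2 G)
    {I : Finset (Fin n)} (hI : G.IsNIndepSet 4 I) :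
    2 * (n - 4) ≤ #G.edgeFinset := by
  calc 2 * (n - 4) = ∑ _v ∈ Iᶜ, 2 := by
        rw [sum_const, card_compl, Fintype.card_fin, hI.card_eq, smul_eq_mul, mul_comm]
    _ ≤ ∑ v ∈ Iᶜ, edgesIn G (insert v I) := sum_le_sum fun v hv => hG _ <| by
        rw [card_insert_of_notMem (mem_compl.1 hv), hI.card_eq]
    _ ≤ #G.edgeFinset := sum_edgesIn_insert_le_card_edgeFinset G hI.isIndepSet

theorem Spans2.nine_le_card_edgeFinset {G : SimpleGraph (Fin 9)} (hG : Spans2 G) :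
    9 ≤ #G.edgeFinset := by
  by_cases hfree : G.IndepSetFree 4
  · have := hfree.choose_two_le (r := 3) (by norm_num)
    rw [card_edgeFinset_turanGraph_nine_three, Nat.choose_two_right] at this
    omega
  · obtain ⟨I, hI⟩ := not_forall_not.1 hfree
    have := hG.two_mul_sub_four_le hI
    omega

theorem two_le_edgesIn_compl_turanGraph {n r : ℕ} (hr : 0 < r) {S : Finset (Fin n)}
    (hS : r + 1 < #S) : 2 ≤ edgesIn (turanGraph n r)ᶜ S := by
  have pigeonhole : ∀ T ⊆ S, r < #T →
      ∃ a ∈ T, ∃ b ∈ T, a ≠ b ∧ (a : ℕ) % r = (b : ℕ) % r := fun T _ hT =>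
    exists_ne_map_eq_of_card_lt_of_maps_to (t := range r) (by simpa using hT)
      fun v _ => by simpa using Nat.mod_lt _ hr
  obtain ⟨a, ha, b, hb, hab, hmod⟩ := pigeonhole S subset_rfl (by omega)
  obtain ⟨c, hc, d, hd, hcd, hmod'⟩ := pigeonhole (S.erase a) (erase_subset a S)
    (by rw [card_erase_of_mem ha]; omega)
  have hedge : ∀ x ∈ S, ∀ y ∈ S, x ≠ y → (x : ℕ) % r = (y : ℕ) % r →
      s(x, y) ∈ (turanGraph n r)ᶜ.edgeFinset.filter fun e => ∀ v ∈ e, v ∈ S := by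
    intro x hx y hy hxy hxy'
    simp only [mem_filter, mem_edgeFinset, mem_edgeSet, compl_adj, turanGraph_adj,
      Sym2.mem_iff]
    exact ⟨⟨hxy, not_not.2 hxy'⟩, by rintro v (rfl | rfl) <;> assumption⟩
  have h1 := hedge a ha b hb hab hmod
  have h2 := hedge c (mem_of_mem_erase hc) d (mem_of_mem_erase hd) hcd hmod'
  have hne : s(a, b) ≠ s(c, d) := by grind
  rw [edgesIn_eq_card_filter]
  exact one_lt_card.2 ⟨_, h1, _, h2, hne⟩

theorem spans2_compl_turanGraph {n : ℕ} : Spans2 (turanGraph n 3)ᶜ :=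
  fun _ hS => two_le_edgesIn_compl_turanGraph (by norm_num) (by omega)

theorem stmt_4 :
    IsLeast {m : ℕ | ∃ G : SimpleGraph (Fin 9), Spans2 G ∧ G.edgeFinset.card = m} 9 := by
  refine ⟨⟨(turanGraph 9 3)ᶜ, spans2_compl_turanGraph, ?_⟩, ?_⟩
  · convert card_edgeFinset_compl_turanGraph_nine_three
  · rintro m ⟨G, hG, rfl⟩
    exact hG.nine_le_card_edgeFinset
end

section
/- There is exactly one pair of integers (m, n) such that √(n + √2016) + √(m − √2016) is rational, namely (m, n) = (50, 50). -/
lemma aux_int (n K Q : ℤ) (hK0 : 0 ≤ K) (hQ1 : 1 ≤ Q)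
    (h1 : K ^ 2 = n ^ 2 - 2016) (h2 : Q ^ 2 = 2 * n + 2 * K) : n = 50 := by
  have hev : Even Q := by
    rcases Int.even_or_odd Q with h | h
    · exact h
    · exfalso
      rcases h with ⟨k, hk⟩
      have : Q ^ 2 = 2 * (2 * k * k + 2 * k) + 1 := by rw [hk]; ring
      omega
  obtain ⟨s, hs⟩ := hev
  have hs1 : 1 ≤ s := by omega
  have h4 : 4 * (s * s) = 2 * n + 2 * K := by linear_combination h2 - (Q + s + s) * hs
  have h5 : 2 * (s * s) = n + K := by linarith
  have h6 : (n - K) * (n + K) = 2016 := by linear_combination -h1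
  have h8 : 2 * ((n - K) * (s * s)) = 2016 := by linear_combination h6 + (n - K) * h5
  have h8' : (n - K) * (s * s) = 1008 := by linarith
  have hss : 0 < s * s := by positivity
  have hd1 : 1 ≤ n - K := by nlinarith
  have hs31 : s ≤ 31 := by nlinarith
  interval_cases s <;> omega

theorem stmt_9 :
    ∀ m n : ℤ, 0 ≤ (n : ℝ) + Real.sqrt 2016 → 0 ≤ (m : ℝ) - Real.sqrt 2016 →
      ((∃ q : ℚ, Real.sqrt ((n : ℝ) + Real.sqrt 2016) +
          Real.sqrt ((m : ℝ) - Real.sqrt 2016) = q) ↔ m = 50 ∧ n = 50) := by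
  have hr0 : (0 : ℝ) ≤ Real.sqrt 2016 := Real.sqrt_nonneg _
  have hr2 : Real.sqrt 2016 ^ 2 = 2016 := Real.sq_sqrt (by norm_num)
  have hirr : Irrational (Real.sqrt 2016) := by
    have : Irrational (Real.sqrt (2016 : ℕ)) :=
      irrational_sqrt_natCast_iff.mpr (by
        rintro ⟨k, hk⟩
        have h1 : k < 45 := by nlinarith
        have h2 : 44 < k := by nlinarith
        omega)
    simpa using this
  intro m n hn hm
  set r := Real.sqrt 2016 with hrdef
  constructor
  · rintro ⟨q, hq⟩
    set a := Real.sqrt ((n : ℝ) + r) with hadef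
    set b := Real.sqrt ((m : ℝ) - r) with hbdef
    have ha0 : 0 ≤ a := Real.sqrt_nonneg _
    have hb0 : 0 ≤ b := Real.sqrt_nonneg _
    have ha2 : a ^ 2 = (n : ℝ) + r := Real.sq_sqrt hn
    have hb2 : b ^ 2 = (m : ℝ) - r := Real.sq_sqrt hm
    have hq0 : (0 : ℝ) ≤ (q : ℝ) := hq ▸ add_nonneg ha0 hb0
    have hab2 : (a * b) ^ 2 = ((n : ℝ) * m - 2016) + ((m : ℝ) - n) * r := by
      have h := hr2
      nlinarith [ha2, hb2]
    have hab : 2 * (a * b) = (q : ℝ) ^ 2 - ((n : ℝ) + m) := by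
      linear_combination (a + b + (q : ℝ)) * hq - ha2 - hb2
    have key : ((q : ℝ) ^ 2 - ((n : ℝ) + m)) ^ 2
        = 4 * (((n : ℝ) * m - 2016) + ((m : ℝ) - n) * r) := by
      linear_combination 4 * hab2 - (2 * (a * b) + ((q : ℝ) ^ 2 - ((n : ℝ) + m))) * hab
    have hmn : m = n := by
      by_contra hne
      have hsub : ((m : ℝ) - n) ≠ 0 := by
        simpa [sub_eq_zero] using fun h => hne (by exact_mod_cast h)
      apply hirr
      refine ⟨((q ^ 2 - ((n : ℚ) + m)) ^ 2 - 4 * ((n : ℚ) * m - 2016)) / (4 * ((m : ℚ) - n)), ?_⟩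
      push_cast
      rw [div_eq_iff (by intro h; apply hsub; linarith [ (by linarith : (4:ℝ) * ((m:ℝ) - n) = 0) ])]
      linear_combination key
    subst hmn
    have hqne : (q : ℝ) ≠ 0 := by
      intro h0
      have ha' : a = 0 := by
        rw [h0] at hq; linarith
      have hnr : (m : ℝ) + r = 0 := by rw [← ha2, ha']; ring
      exact hirr.ne_int (-m) (by push_cast; linarith)
    have habsq : (a * b) ^ 2 = (m : ℝ) ^ 2 - 2016 := by linear_combination hab2
    set t : ℚ := (q ^ 2 - 2 * m) / 2 with htdef
    have htr : (t : ℝ) = a * b := by rw [htdef]; push_cast; linarith [hab]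
    obtain ⟨K, hK⟩ : ∃ K : ℤ, (t : ℝ) = K := by
      by_contra hno
      exact Rat.not_irrational t (irrational_nrt_of_notint_nrt 2 (m ^ 2 - 2016)
        (by rw [htr]; push_cast; linear_combination habsq) hno (by norm_num))
    have hK' : (K : ℝ) = a * b := by rw [← hK, htr]
    have hK0 : 0 ≤ K := by
      have : (0 : ℝ) ≤ (K : ℝ) := by rw [hK']; exact mul_nonneg ha0 hb0
      exact_mod_cast this
    have hK2 : K ^ 2 = m ^ 2 - 2016 := by
      have : (K : ℝ) ^ 2 = (m : ℝ) ^ 2 - 2016 := by rw [hK']; exact habsq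
      exact_mod_cast this
    obtain ⟨Q, hQ⟩ : ∃ Q : ℤ, ((q : ℝ)) = Q := by
      by_contra hno
      refine Rat.not_irrational q ?_
      have hxr : ((q : ℚ) : ℝ) ^ 2 = ((2 * m + 2 * K : ℤ) : ℝ) := by
        push_cast
        linear_combination -hab - 2 * hK'
      exact irrational_nrt_of_notint_nrt 2 (2 * m + 2 * K) hxr hno (by norm_num)
    have hQ2 : Q ^ 2 = 2 * m + 2 * K := by
      have : (Q : ℝ) ^ 2 = 2 * (m : ℝ) + 2 * (K : ℝ) := by
        rw [← hQ]; linear_combination -hab - 2 * hK'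
      exact_mod_cast this
    have hQ1 : 1 ≤ Q := by
      have h1 : (0 : ℝ) < (Q : ℝ) := by
        rw [← hQ]
        exact lt_of_le_of_ne hq0 (Ne.symm hqne)
      have : (0 : ℤ) < Q := by exact_mod_cast h1
      omega
    have hn50 := aux_int m K Q hK0 hQ1 hK2 hQ2
    exact ⟨hn50, hn50⟩
  · rintro ⟨rfl, rfl⟩
    refine ⟨12, ?_⟩
    have h50 : (0:ℝ) ≤ 50 + r := by positivity
    have hmul : Real.sqrt (50 + r) * Real.sqrt (50 - r) = 22 := by
      rw [← Real.sqrt_mul h50]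
      rw [show (50 + r) * (50 - r) = 484 by nlinarith [hr2]]
      rw [show (484 : ℝ) = 22 ^ 2 by norm_num, Real.sqrt_sq (by norm_num)]
    have hsum0 : 0 ≤ Real.sqrt ((50:ℤ) + r) + Real.sqrt ((50:ℤ) - r) :=
      add_nonneg (Real.sqrt_nonneg _) (Real.sqrt_nonneg _)
    have hsq : (Real.sqrt ((50:ℤ) + r) + Real.sqrt ((50:ℤ) - r)) ^ 2 = 144 := by
      push_cast at hm hn ⊢
      have ha2 : Real.sqrt (50 + r) ^ 2 = 50 + r := Real.sq_sqrt (by positivity)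
      have hb2 : Real.sqrt (50 - r) ^ 2 = 50 - r := Real.sq_sqrt hm
      nlinarith [hmul, ha2, hb2]
    have : Real.sqrt ((50:ℤ) + r) + Real.sqrt ((50:ℤ) - r) = 12 := by
      nlinarith [hsq, hsum0]
    push_cast
    push_cast at this
    linarith
end

section
/- If m and n are integers such that √(n + √2016) + √(m − √2016) is rational, then m = n. -/
theorem stmt_11 (m n : ℤ) (hn : 0 ≤ (n : ℝ) + Real.sqrt 2016)
    (hm : 0 ≤ (m : ℝ) - Real.sqrt 2016)
    (h : ∃ q : ℚ, Real.sqrt ((n : ℝ) + Real.sqrt 2016) +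
        Real.sqrt ((m : ℝ) - Real.sqrt 2016) = q) : m = n := by
  obtain ⟨q, hq⟩ := h
  have hirr : Irrational (Real.sqrt 2016) := by
    have : Irrational (Real.sqrt ((2016 : ℕ) : ℝ)) := by
      rw [irrational_sqrt_natCast_iff]
      rintro ⟨r, hr⟩
      have h45 : r < 45 := by nlinarith
      interval_cases r <;> omega
    simpa using this
  set a := Real.sqrt ((n : ℝ) + Real.sqrt 2016) with ha
  set b := Real.sqrt ((m : ℝ) - Real.sqrt 2016) with hb
  have ha2 : a ^ 2 = (n : ℝ) + Real.sqrt 2016 := Real.sq_sqrt hn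
  have hb2 : b ^ 2 = (m : ℝ) - Real.sqrt 2016 := Real.sq_sqrt hm
  have hsq : (q : ℝ) ^ 2 = (n : ℝ) + (m : ℝ) + 2 * (a * b) := by
    rw [← hq]; ring_nf; nlinarith [ha2, hb2]
  have hab : a * b = ((q : ℝ) ^ 2 - n - m) / 2 := by linarith
  have hab2 : (a * b) ^ 2 = ((n : ℝ) + Real.sqrt 2016) * ((m : ℝ) - Real.sqrt 2016) := by
    rw [mul_pow, ha2, hb2]
  have h2016 : Real.sqrt 2016 ^ 2 = 2016 := Real.sq_sqrt (by norm_num)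
  have key : ((m : ℝ) - n) * Real.sqrt 2016 =
      (((q : ℝ) ^ 2 - n - m) / 2) ^ 2 - n * m + 2016 := by
    rw [← hab]
    nlinarith [hab2, h2016]
  by_contra hne
  have hmn : (m : ℝ) - n ≠ 0 := by
    intro h0
    apply hne
    have : (m : ℝ) = n := by linarith
    exact_mod_cast this
  have : Real.sqrt 2016 =
      (((((q : ℚ) ^ 2 - n - m) / 2) ^ 2 - n * m + 2016) / ((m : ℚ) - n) : ℚ) := by
    push_cast
    field_simp
    linarith [key, mul_comm ((m:ℝ) - n) (Real.sqrt 2016)]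
  exact hirr ⟨_, this.symm⟩
end

section
/- For a rooted complete binary tree of depth k ≥ 3 whose 2^(k−1) leaves are each colored with one of two colors, the number of color-preserving automorphisms (tree automorphisms fixing adjacency and preserving leaf colors) is at least 2^(2^(k−3)), for every coloring. -/
/-
Every coloring of the four leaves of a three-level binary tree is preserved by some nontrivial
automorphism: swap two sibling leaves of equal color, or, if each sibling pair is bichromatic,
exchange the two pairs. In a tree with `k ≥ 3` levels there are `2 ^ (k - 3)` disjoint such
subtrees, hanging from the vertices at level `k - 2`, and performing the chosen automorphism on
any subset of them gives `2 ^ 2 ^ (k - 3)` distinct color-preserving automorphisms. Automorphisms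
are described by their portraits: which vertices get their two children swapped.
-/

/-- The vertices of a `k`-level complete binary tree: binary strings of
length `< k`.  The root is the empty string (level 1), and a vertex at
level `i` (a string of length `i - 1`) has children obtained by prepending a
bit; the leaves are the `2 ^ (k - 1)` strings of length `k - 1` (level `k`). -/
def TVert (k : ℕ) : Type := {l : List Bool // l.length < k}

/-- Adjacency in the tree: one vertex is a child of the other. -/
def TAdj (k : ℕ) (x y : TVert k) : Prop :=
  (∃ b : Bool, y.val = b :: x.val) ∨ (∃ b : Bool, x.val = b :: y.val)

/-- The color-preserving automorphisms of the `k`-level complete binary tree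
whose leaves are colored by `c` (colors are booleans): permutations of the
vertices preserving adjacency in both directions and the colors of leaves. -/
def ColorAuts (k : ℕ) (c : List Bool → Bool) : Set (Equiv.Perm (TVert k)) :=
  {f | (∀ x y : TVert k, TAdj k x y ↔ TAdj k (f x) (f y)) ∧
       ∀ x : TVert k, x.val.length = k - 1 → c ((f x).val) = c x.val}

instance (k : ℕ) : Finite (TVert k) := (List.finite_length_lt Bool k).to_subtype

namespace TVert

/-- The automorphism with portrait `σ`: swapping the children of `l` flips the bit prepended
to `l`. -/
def portraitMap (σ : List Bool → Bool) : List Bool → List Bool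
  | [] => []
  | b :: l => xor b (σ l) :: portraitMap σ l

def portraitInv (σ : List Bool → Bool) : List Bool → List Bool
  | [] => []
  | b :: l => xor b (σ (portraitInv σ l)) :: portraitInv σ l

variable (σ : List Bool → Bool)

@[simp]
theorem length_portraitMap (l : List Bool) : (portraitMap σ l).length = l.length := by
  induction l <;> simp [portraitMap, *]

theorem portraitInv_portraitMap (l : List Bool) : portraitInv σ (portraitMap σ l) = l := by
  induction l <;> simp [portraitMap, portraitInv, *]

theorem portraitMap_portraitInv (l : List Bool) : portraitMap σ (portraitInv σ l) = l := by
  induction l <;> simp [portraitMap, portraitInv, *]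

def portraitEquiv : Equiv.Perm (List Bool) :=
  ⟨portraitMap σ, portraitInv σ, portraitInv_portraitMap σ, portraitMap_portraitInv σ⟩

def portraitPerm (k : ℕ) : Equiv.Perm (TVert k) :=
  (portraitEquiv σ).subtypePerm fun l => by simp [portraitEquiv]

theorem portraitMap_injective : Function.Injective (portraitMap σ) :=
  (portraitEquiv σ).injective

theorem portraitMap_cons (b : Bool) (l : List Bool) :
    portraitMap σ (b :: l) = xor b (σ l) :: portraitMap σ l :=
  rfl

theorem exists_eq_cons_iff_portraitMap {x y : List Bool} :
    (∃ b, y = b :: x) ↔ ∃ b, portraitMap σ y = b :: portraitMap σ x := by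
  constructor
  · rintro ⟨b, rfl⟩
    exact ⟨_, portraitMap_cons σ b x⟩
  · rintro ⟨b, h⟩
    cases y with
    | nil => simp [portraitMap] at h
    | cons b' y =>
      rw [portraitMap_cons, List.cons.injEq] at h
      exact ⟨b', by rw [portraitMap_injective σ h.2]⟩

theorem tAdj_iff_tAdj_portraitPerm {k : ℕ} (x y : TVert k) :
    TAdj k x y ↔ TAdj k (portraitPerm σ k x) (portraitPerm σ k y) :=
  (exists_eq_cons_iff_portraitMap σ).or (exists_eq_cons_iff_portraitMap σ)

theorem portraitMap_eq_self {l : List Bool}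
    (h : ∀ m : List Bool, m.length < l.length → σ m = false) : portraitMap σ l = l := by
  induction l with
  | nil => rfl
  | cons b l ih =>
    rw [portraitMap_cons, h l (by simp), Bool.xor_false,
      ih fun m hm => h m (by simp only [List.length_cons]; omega)]

theorem apply_eq_of_portraitPerm_eq {σ' : List Bool → Bool} {k : ℕ}
    (h : portraitPerm σ k = portraitPerm σ' k) {l : List Bool} (hl : l.length + 1 < k) :
    σ l = σ' l := by
  have := congrArg Subtype.val (DFunLike.congr_fun h (⟨false :: l, hl⟩ : TVert k))
  change portraitMap σ (false :: l) = portraitMap σ' (false :: l) at this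
  simpa using (List.cons.inj this).1

end TVert

/-- `x = (r, h)` encodes the automorphism of the three-level tree that swaps the children of the
root iff `r` and those of its child `b` iff `h b`; `q a b` is the color of the leaf reached via `b`
and then `a`. -/
def PreservesLeafColors (q : Bool → Bool → Bool) (x : Bool × (Bool → Bool)) : Prop :=
  ∀ a b, q (xor a (x.2 b)) (xor b x.1) = q a b

theorem preservesLeafColors_bot (q : Bool → Bool → Bool) : PreservesLeafColors q ⊥ := by
  intro a b
  simp

theorem exists_ne_bot_preservesLeafColors (q : Bool → Bool → Bool) :
    ∃ x ≠ ⊥, PreservesLeafColors q x := by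
  revert q
  unfold PreservesLeafColors
  decide

namespace TVert

/-- The portrait acting by `t w`, encoded as in `PreservesLeafColors`, on the three-level subtree
below each vertex `w` of length `n`, and trivially elsewhere. -/
def blockPortrait (n : ℕ) (t : List.Vector Bool n → Bool × (Bool → Bool)) (l : List Bool) :
    Bool :=
  if hl : l.length = n then (t ⟨l, hl⟩).1
  else
    match l with
    | b :: w => if hw : w.length = n then (t ⟨w, hw⟩).2 b else false
    | [] => false

variable {n : ℕ} (t : List.Vector Bool n → Bool × (Bool → Bool))

theorem blockPortrait_of_length_lt {l : List Bool} (hl : l.length < n) :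
    blockPortrait n t l = false := by
  rw [blockPortrait, dif_neg hl.ne]
  rcases l with _ | ⟨b, w⟩
  · rfl
  · exact dif_neg (by simp only [List.length_cons] at hl; omega)

theorem blockPortrait_val (w : List.Vector Bool n) : blockPortrait n t w.val = (t w).1 :=
  dif_pos w.2

theorem blockPortrait_cons_val (b : Bool) (w : List.Vector Bool n) :
    blockPortrait n t (b :: w.val) = (t w).2 b := by
  rw [blockPortrait, dif_neg (by simp [w.2])]
  exact dif_pos w.2

theorem portraitMap_blockPortrait_leaf (a b : Bool) (w : List.Vector Bool n) :
    portraitMap (blockPortrait n t) (a :: b :: w.val) =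
      xor a ((t w).2 b) :: xor b (t w).1 :: w.val := by
  have hfix : portraitMap (blockPortrait n t) w.val = w.val :=
    portraitMap_eq_self _ fun m hm => blockPortrait_of_length_lt t (w.2 ▸ hm)
  rw [portraitMap_cons, portraitMap_cons, hfix, blockPortrait_val, blockPortrait_cons_val]

theorem portraitPerm_blockPortrait_mem_colorAuts (c : List Bool → Bool)
    (ht : ∀ w, PreservesLeafColors (fun a b => c (a :: b :: w.val)) (t w)) :
    portraitPerm (blockPortrait n t) (n + 3) ∈ ColorAuts (n + 3) c := by
  refine ⟨tAdj_iff_tAdj_portraitPerm _, ?_⟩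
  rintro ⟨_ | ⟨a, _ | ⟨b, w⟩⟩, _⟩ hx
  · simp at hx
  · simp at hx
  have hw : w.length = n := by simpa using hx
  change c (portraitMap _ (a :: b :: w)) = _
  simpa [portraitMap_blockPortrait_leaf t a b ⟨w, hw⟩] using ht ⟨w, hw⟩ a b

theorem portraitPerm_blockPortrait_injective :
    Function.Injective fun t : List.Vector Bool n → Bool × (Bool → Bool) =>
      portraitPerm (blockPortrait n t) (n + 3) := by
  intro t t' h
  have key {l : List Bool} (hl : l.length < n + 2) : blockPortrait n t l = blockPortrait n t' l :=
    apply_eq_of_portraitPerm_eq _ h (by omega)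
  funext w
  refine Prod.ext ?_ (funext fun b => ?_)
  · simpa [blockPortrait_val] using key (l := w.val) (by simp [w.2])
  · simpa [blockPortrait_cons_val] using key (l := b :: w.val) (by simp [w.2])

end TVert

open TVert in
theorem stmt_15 (k : ℕ) (hk : 3 ≤ k) (c : List Bool → Bool) :
    2 ^ 2 ^ (k - 3) ≤ Nat.card (ColorAuts k c) := by
  obtain ⟨n, rfl⟩ : ∃ n, k = n + 3 := ⟨k - 3, by omega⟩
  choose t₀ ht₀_ne ht₀ using fun w : List.Vector Bool n =>
    exists_ne_bot_preservesLeafColors fun a b => c (a :: b :: w.val)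
  let t (s : List.Vector Bool n → Bool) (w : List.Vector Bool n) : Bool × (Bool → Bool) :=
    if s w then t₀ w else ⊥
  have ht (s w) : PreservesLeafColors (fun a b => c (a :: b :: w.val)) (t s w) := by
    unfold t; split
    · exact ht₀ w
    · exact preservesLeafColors_bot _
  have t_injective : Function.Injective t := by
    intro s s' h
    funext w
    have := congrFun h w
    cases hs : s w <;> cases hs' : s' w <;>
      simp [t, hs, hs', ht₀_ne w, Ne.symm (ht₀_ne w)] at this ⊢
  let Φ (s : List.Vector Bool n → Bool) : ColorAuts (n + 3) c :=
    ⟨_, portraitPerm_blockPortrait_mem_colorAuts (t s) c (ht s)⟩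
  have Φ_injective : Function.Injective Φ := fun s s' h =>
    t_injective (portraitPerm_blockPortrait_injective (congrArg Subtype.val h))
  calc 2 ^ 2 ^ (n + 3 - 3) = Nat.card (List.Vector Bool n → Bool) := by simp
    _ ≤ Nat.card (ColorAuts (n + 3) c) := Nat.card_le_card_of_injective Φ Φ_injective
end

section
/- For a 10-level complete binary tree with 512 leaves each colored blue or golden, the maximum M such that every coloring admits at least M color-preserving automorphisms is M = 2^128. -/
/-!
An automorphism of the tree is determined by the set of vertices at which it exchanges the two
children: it must fix the root, the only vertex with two neighbours, and then it maps the children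
of each vertex to the children of its image. Splitting at the root, the automorphism count of a
colouring `c` with subtree colourings `c₀`, `c₁` is `|Aut c₀| * |Aut c₁|`, doubled when
`c₀ ≅ c₁`.

Lower bound: by induction on the depth `d + 1`, any two colourings `c`, `c'` satisfy
`|Aut c| * |Aut c'| * (2 if c ≅ c' else 1) ≥ 2 ^ 2 ^ d`; at depth one this is a check of the
colourings of two leaves. Applied to the two subtrees of the root this gives
`|Aut c| ≥ 2 ^ 2 ^ d` at depth `d + 2`.

Upper bound: if `a, b, z` are pairwise non-isomorphic colourings with `N` automorphisms each, then
the colourings `ab, az, bz` obtained by putting them side by side are pairwise non-isomorphic with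
`N ^ 2` automorphisms each. Starting from three such colourings of depth `2` with `N = 2`, this
reaches `2 ^ 2 ^ 7 = 2 ^ 128` at depth `9`, i.e. for the tree with `10` levels.
-/

namespace ColoredTree

variable {d : ℕ}

/-- The image of the vertex `l` under the tree automorphism that exchanges the two children of
each vertex `x` with `s x = true`. -/
def swapAlong (s : List Bool → Bool) : List Bool → List Bool
  | [] => []
  | b :: x => xor b (s x) :: swapAlong s x

def unswapAlong (s : List Bool → Bool) : List Bool → List Bool
  | [] => []
  | b :: x => xor b (s (unswapAlong s x)) :: unswapAlong s x

@[simp] lemma swapAlong_nil (s : List Bool → Bool) : swapAlong s [] = [] := rfl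

@[simp] lemma swapAlong_cons (s : List Bool → Bool) (b : Bool) (x : List Bool) :
    swapAlong s (b :: x) = xor b (s x) :: swapAlong s x := rfl

@[simp] lemma length_swapAlong (s : List Bool → Bool) (l : List Bool) :
    (swapAlong s l).length = l.length := by
  induction l <;> simp [*]

@[simp] lemma length_unswapAlong (s : List Bool → Bool) (l : List Bool) :
    (unswapAlong s l).length = l.length := by
  induction l <;> simp [unswapAlong, *]

@[simp] lemma swapAlong_unswapAlong (s : List Bool → Bool) (l : List Bool) :
    swapAlong s (unswapAlong s l) = l := by
  induction l <;> simp [unswapAlong, *]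

@[simp] lemma unswapAlong_swapAlong (s : List Bool → Bool) (l : List Bool) :
    unswapAlong s (swapAlong s l) = l := by
  induction l <;> simp [unswapAlong, *]

lemma swapAlong_congr {s t : List Bool → Bool} {l : List Bool}
    (h : ∀ x : List Bool, x.length < l.length → s x = t x) : swapAlong s l = swapAlong t l := by
  induction l with
  | nil => rfl
  | cons b x ih =>
    rw [swapAlong_cons, swapAlong_cons, h x (by simp),
      ih fun y hy => h y (by simp only [List.length_cons]; omega)]

lemma swapAlong_congr_of_length_le {s t : List Bool → Bool} {l : List Bool} (hl : l.length ≤ d)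
    (h : ∀ x : List Bool, x.length < d → s x = t x) : swapAlong s l = swapAlong t l :=
  swapAlong_congr fun x hx => h x (by omega)

lemma swapAlong_swapAlong (s t : List Bool → Bool) (l : List Bool) :
    swapAlong s (swapAlong t l) = swapAlong (fun x => xor (t x) (s (swapAlong t x))) l := by
  induction l <;> simp [*]

lemma unswapAlong_eq_swapAlong (s : List Bool → Bool) (l : List Bool) :
    unswapAlong s l = swapAlong (fun x => s (unswapAlong s x)) l := by
  induction l <;> simp [unswapAlong, *]

@[simp] lemma swapAlong_false (l : List Bool) : swapAlong (fun _ => false) l = l := by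
  induction l <;> simp [*]

lemma swapAlong_append_singleton (s : List Bool → Bool) (l : List Bool) (b : Bool) :
    swapAlong s (l ++ [b]) = swapAlong (fun x => s (x ++ [b])) l ++ [xor b (s [])] := by
  induction l <;> simp [*]

abbrev Swaps (d : ℕ) : Type := {l : List Bool // l.length < d} → Bool

instance (d : ℕ) : Finite {l : List Bool // l.length < d} :=
  (List.finite_length_lt Bool d).to_subtype

namespace Swaps

def extend (s : Swaps d) (l : List Bool) : Bool :=
  if h : l.length < d then s ⟨l, h⟩ else false

lemma extend_of_lt (s : Swaps d) {l : List Bool} (h : l.length < d) : s.extend l = s ⟨l, h⟩ :=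
  dif_pos h

lemma ext_swapAlong {s t : Swaps d}
    (h : ∀ l : List Bool, l.length ≤ d → swapAlong s.extend l = swapAlong t.extend l) :
    s = t := by
  funext ⟨x, hx⟩
  have := congrArg List.head? (h (false :: x) (by simp only [List.length_cons]; omega))
  simpa [extend_of_lt _ hx] using this

def trans (s t : Swaps d) : Swaps d :=
  fun x => xor (s.extend x.val) (t.extend (swapAlong s.extend x.val))

def symm (s : Swaps d) : Swaps d :=
  fun x => s.extend (unswapAlong s.extend x.val)

lemma swapAlong_trans (s t : Swaps d) {l : List Bool} (hl : l.length ≤ d) :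
    swapAlong (s.trans t).extend l = swapAlong t.extend (swapAlong s.extend l) := by
  rw [swapAlong_swapAlong]
  exact swapAlong_congr_of_length_le hl fun x hx => extend_of_lt _ hx

lemma swapAlong_symm (s : Swaps d) {l : List Bool} (hl : l.length ≤ d) :
    swapAlong s.symm.extend l = unswapAlong s.extend l := by
  rw [unswapAlong_eq_swapAlong]
  exact swapAlong_congr_of_length_le hl fun x hx => extend_of_lt _ hx

end Swaps

/-- Isomorphisms between the leaf colourings `c` and `c'` of the tree of depth `d`, whose vertices
are the lists of length `≤ d` and whose leaves are the lists of length `d`. -/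
@[ext]
structure LeafIso (d : ℕ) (c c' : List Bool → Bool) where
  swaps : Swaps d
  color_swapAlong : ∀ l : List Bool, l.length = d → c' (swapAlong swaps.extend l) = c l

noncomputable def autCount (d : ℕ) (c : List Bool → Bool) : ℕ := Nat.card (LeafIso d c c)

namespace LeafIso

variable {a b c c' : List Bool → Bool}

instance : Finite (LeafIso d c c') :=
  Finite.of_injective swaps fun _ _ => LeafIso.ext

def refl (c : List Bool → Bool) : LeafIso d c c where
  swaps _ := false
  color_swapAlong l _ := by
    have : Swaps.extend (d := d) (fun _ => false) = fun _ => false := by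
      funext l; simp [Swaps.extend]
    rw [this, swapAlong_false]

def trans (e : LeafIso d a b) (e' : LeafIso d b c) : LeafIso d a c where
  swaps := e.swaps.trans e'.swaps
  color_swapAlong l hl := by
    rw [Swaps.swapAlong_trans _ _ hl.le, e'.color_swapAlong _ (by simpa using hl),
      e.color_swapAlong l hl]

def symm (e : LeafIso d a b) : LeafIso d b a where
  swaps := e.swaps.symm
  color_swapAlong l hl := by
    rw [Swaps.swapAlong_symm _ hl.le, ← e.color_swapAlong _ (by simpa using hl),
      swapAlong_unswapAlong]

lemma trans_symm_trans (e : LeafIso d b c) (e' : LeafIso d a c) :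
    (e'.trans e.symm).trans e = e' := by
  ext1
  dsimp only [trans, symm]
  refine Swaps.ext_swapAlong fun l hl => ?_
  rw [Swaps.swapAlong_trans _ _ hl, Swaps.swapAlong_trans _ _ hl,
    Swaps.swapAlong_symm _ (by simpa using hl), swapAlong_unswapAlong]

lemma trans_trans_symm (e : LeafIso d b c) (e' : LeafIso d a b) :
    (e'.trans e).trans e.symm = e' := by
  ext1
  dsimp only [trans, symm]
  refine Swaps.ext_swapAlong fun l hl => ?_
  rw [Swaps.swapAlong_trans _ _ hl, Swaps.swapAlong_trans _ _ hl,
    Swaps.swapAlong_symm _ (by simpa using hl), unswapAlong_swapAlong]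

def autEquiv (e : LeafIso d c c') : LeafIso d c c ≃ LeafIso d c c' where
  toFun a := a.trans e
  invFun f := f.trans e.symm
  left_inv a := trans_trans_symm e a
  right_inv f := trans_symm_trans e f

end LeafIso

lemma card_leafIso_of_nonempty {c c' : List Bool → Bool}
    (h : Nonempty (LeafIso d c c')) : Nat.card (LeafIso d c c') = autCount d c :=
  (Nat.card_congr h.some.autEquiv).symm

def subColoring (c : List Bool → Bool) (b : Bool) : List Bool → Bool := fun l => c (l ++ [b])

namespace Swaps

def root (s : Swaps (d + 1)) : Bool := s ⟨[], Nat.succ_pos d⟩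

def child (s : Swaps (d + 1)) (b : Bool) : Swaps d :=
  fun x => s ⟨x.val ++ [b], by simpa using x.2⟩

def node (ρ : Bool) (t : Bool → Swaps d) : Swaps (d + 1) :=
  fun x => if hx : x.val = [] then ρ else
    t (x.val.getLast hx) ⟨x.val.dropLast, by
      simpa using Nat.sub_lt_right_of_lt_add (List.length_pos_iff.mpr hx) x.2⟩

@[simp] lemma root_node (ρ : Bool) (t : Bool → Swaps d) : (node ρ t).root = ρ := rfl

@[simp] lemma child_node (ρ : Bool) (t : Bool → Swaps d) (b : Bool) :
    (node ρ t).child b = t b := by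
  funext x
  simp [child, node]

lemma node_root_child (s : Swaps (d + 1)) : node s.root s.child = s := by
  funext ⟨x, hx⟩
  rcases List.eq_nil_or_concat' x with rfl | ⟨l, b, rfl⟩
  · rfl
  · simp [node, child]

lemma swapAlong_extend_append_singleton (s : Swaps (d + 1)) {l : List Bool} (hl : l.length ≤ d)
    (b : Bool) :
    swapAlong s.extend (l ++ [b]) = swapAlong (s.child b).extend l ++ [xor b s.root] := by
  rw [swapAlong_append_singleton, extend_of_lt _ (Nat.succ_pos d)]
  congr 1
  exact swapAlong_congr_of_length_le hl fun x hx => by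
    rw [extend_of_lt _ (by simpa using hx), extend_of_lt _ hx]; rfl

end Swaps

lemma color_swapAlong_succ_iff (c c' : List Bool → Bool) (s : Swaps (d + 1)) :
    (∀ l : List Bool, l.length = d + 1 → c' (swapAlong s.extend l) = c l) ↔
      ∀ b : Bool, ∀ l : List Bool, l.length = d →
        subColoring c' (xor b s.root) (swapAlong (s.child b).extend l) = subColoring c b l := by
  constructor
  · intro h b l hl
    simpa [subColoring, s.swapAlong_extend_append_singleton hl.le] using h (l ++ [b]) (by simp [hl])
  · intro h L hL
    obtain ⟨l, b, rfl⟩ := (List.eq_nil_or_concat' L).resolve_left (by rintro rfl; simp at hL)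
    have hl : l.length = d := by simpa using hL
    simpa [subColoring, s.swapAlong_extend_append_singleton hl.le] using h b l hl

/-- `ρ` records whether the two subtrees of the root are exchanged. -/
def leafIsoSuccEquiv (c c' : List Bool → Bool) :
    LeafIso (d + 1) c c' ≃
      Σ ρ : Bool, ∀ b : Bool, LeafIso d (subColoring c b) (subColoring c' (xor b ρ)) where
  toFun e := ⟨e.swaps.root, fun b =>
    ⟨e.swaps.child b, (color_swapAlong_succ_iff c c' _).1 e.color_swapAlong b⟩⟩
  invFun p := ⟨Swaps.node p.1 fun b => (p.2 b).swaps,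
    (color_swapAlong_succ_iff c c' _).2 fun b => by simpa using (p.2 b).color_swapAlong⟩
  left_inv e := LeafIso.ext (Swaps.node_root_child e.swaps)
  right_inv p := Sigma.ext rfl <| heq_of_eq <| funext fun b => LeafIso.ext (by simp)

lemma card_leafIso_succ (c c' : List Bool → Bool) :
    Nat.card (LeafIso (d + 1) c c') =
      ∑ ρ : Bool, ∏ b : Bool,
        Nat.card (LeafIso d (subColoring c b) (subColoring c' (xor b ρ))) := by
  rw [Nat.card_congr (leafIsoSuccEquiv c c'), Nat.card_sigma]
  simp only [Nat.card_pi]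

lemma nonempty_leafIso_succ (c c' : List Bool → Bool) :
    Nonempty (LeafIso (d + 1) c c') ↔
      ∃ ρ : Bool, ∀ b : Bool,
        Nonempty (LeafIso d (subColoring c b) (subColoring c' (xor b ρ))) := by
  rw [(leafIsoSuccEquiv c c').nonempty_congr, nonempty_sigma]
  simp only [Classical.nonempty_pi]

open Classical in
noncomputable def rootSwapFactor (d : ℕ) (a b : List Bool → Bool) : ℕ :=
  if Nonempty (LeafIso d a b) then 2 else 1

lemma one_le_rootSwapFactor (a b : List Bool → Bool) : 1 ≤ rootSwapFactor d a b := by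
  unfold rootSwapFactor; split <;> omega

lemma rootSwapFactor_of_isEmpty {a b : List Bool → Bool} (h : IsEmpty (LeafIso d a b)) :
    rootSwapFactor d a b = 1 :=
  if_neg (not_nonempty_iff.mpr h)

lemma autCount_succ (c : List Bool → Bool) :
    autCount (d + 1) c = autCount d (subColoring c false) * autCount d (subColoring c true) *
      rootSwapFactor d (subColoring c false) (subColoring c true) := by
  rw [autCount, card_leafIso_succ]
  simp only [Fintype.sum_bool, Fintype.prod_bool, Bool.xor_self, Bool.false_xor, Bool.xor_false]
  by_cases h : Nonempty (LeafIso d (subColoring c false) (subColoring c true))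
  · rw [card_leafIso_of_nonempty h, card_leafIso_of_nonempty ⟨h.some.symm⟩, rootSwapFactor,
      if_pos h, autCount, autCount]
    ring
  · have := not_nonempty_iff.mp h
    rw [Nat.card_of_isEmpty (α := LeafIso d _ (subColoring c true)),
      rootSwapFactor_of_isEmpty this, autCount, autCount]
    ring

lemma nonempty_leafIso_zero (c c' : List Bool → Bool) :
    Nonempty (LeafIso 0 c c') ↔ c' [] = c [] := by
  constructor
  · rintro ⟨e⟩
    exact e.color_swapAlong [] rfl
  · intro h
    exact ⟨⟨fun _ => false, fun l hl => by rw [List.length_eq_zero_iff.mp hl]; exact h⟩⟩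

lemma autCount_zero (c : List Bool → Bool) : autCount 0 c = 1 := by
  have : Subsingleton (LeafIso 0 c c) :=
    ⟨fun e e' => LeafIso.ext (funext fun x => absurd x.2 (Nat.not_lt_zero _))⟩
  exact Nat.card_eq_one_iff_unique.mpr ⟨this, ⟨LeafIso.refl c⟩⟩

lemma two_le_autCount_one_mul (c c' : List Bool → Bool) :
    2 ≤ autCount 1 c * autCount 1 c' * rootSwapFactor 1 c c' := by
  simp only [autCount_succ, autCount_zero, rootSwapFactor, nonempty_leafIso_succ,
    nonempty_leafIso_zero, subColoring, Bool.exists_bool, Bool.forall_bool, List.nil_append,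
    Bool.xor_self, Bool.xor_false, Bool.false_xor]
  generalize c [false] = a₀, c [true] = a₁, c' [false] = a₀', c' [true] = a₁'
  revert a₀ a₁ a₀' a₁'
  decide

lemma two_pow_two_pow_le_autCount_mul (d : ℕ) (c c' : List Bool → Bool) :
    2 ^ 2 ^ d ≤ autCount (d + 1) c * autCount (d + 1) c' * rootSwapFactor (d + 1) c c' := by
  induction d generalizing c c' with
  | zero => exact two_le_autCount_one_mul c c'
  | succ d ih =>
    rw [autCount_succ c, autCount_succ c']
    calc 2 ^ 2 ^ (d + 1) = 2 ^ 2 ^ d * 2 ^ 2 ^ d := by rw [pow_succ, pow_mul, sq]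
      _ ≤ _ * _ := Nat.mul_le_mul (ih _ _) (ih _ _)
      _ ≤ _ := Nat.le_mul_of_pos_right _ (one_le_rootSwapFactor _ _)

lemma two_pow_two_pow_le_autCount (d : ℕ) (c : List Bool → Bool) :
    2 ^ 2 ^ d ≤ autCount (d + 2) c := by
  rw [autCount_succ]
  exact two_pow_two_pow_le_autCount_mul d _ _

def glue (c₀ c₁ : List Bool → Bool) : List Bool → Bool :=
  fun l => if l.getLastD false then c₁ l.dropLast else c₀ l.dropLast

@[simp] lemma subColoring_glue (c₀ c₁ : List Bool → Bool) (b : Bool) :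
    subColoring (glue c₀ c₁) b = bif b then c₁ else c₀ := by
  funext l
  cases b <;> simp [subColoring, glue]

lemma autCount_glue (a b : List Bool → Bool) :
    autCount (d + 1) (glue a b) = autCount d a * autCount d b * rootSwapFactor d a b := by
  simp [autCount_succ]

lemma nonempty_leafIso_glue (a b a' b' : List Bool → Bool) :
    Nonempty (LeafIso (d + 1) (glue a b) (glue a' b')) ↔
      Nonempty (LeafIso d a a') ∧ Nonempty (LeafIso d b b') ∨
        Nonempty (LeafIso d a b') ∧ Nonempty (LeafIso d b a') := by
  simp [nonempty_leafIso_succ, Bool.exists_bool]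

def IsNonIsoTriple (d N : ℕ) (a b z : List Bool → Bool) : Prop :=
  autCount d a = N ∧ autCount d b = N ∧ autCount d z = N ∧
    ¬Nonempty (LeafIso d a b) ∧ ¬Nonempty (LeafIso d a z) ∧ ¬Nonempty (LeafIso d b z)

lemma IsNonIsoTriple.glue {N : ℕ} {a b z : List Bool → Bool} (h : IsNonIsoTriple d N a b z) :
    IsNonIsoTriple (d + 1) (N * N) (glue a b) (glue a z) (glue b z) := by
  obtain ⟨ha, hb, hz, hab, haz, hbz⟩ := h
  simp [IsNonIsoTriple, autCount_glue, nonempty_leafIso_glue, rootSwapFactor, *]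

lemma exists_isNonIsoTriple (n : ℕ) : ∃ a b z, IsNonIsoTriple (n + 2) (2 ^ 2 ^ n) a b z := by
  induction n with
  | zero =>
    let p := glue (fun _ => false) (fun _ => true)
    refine ⟨glue p (glue (fun _ => false) (fun _ => false)),
      glue p (glue (fun _ => true) (fun _ => true)), glue p p, ?_⟩
    simp [p, IsNonIsoTriple, autCount_glue, nonempty_leafIso_glue, rootSwapFactor, autCount_zero,
      nonempty_leafIso_zero]
  | succ n ih =>
    obtain ⟨a, b, z, h⟩ := ih
    exact ⟨_, _, _, by simpa [pow_succ, pow_mul, sq] using h.glue⟩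

theorem isLeast_autCount (n : ℕ) : IsLeast (Set.range (autCount (n + 2))) (2 ^ 2 ^ n) := by
  obtain ⟨a, -, -, ha, -⟩ := exists_isNonIsoTriple n
  exact ⟨⟨a, ha⟩, by rintro _ ⟨c, rfl⟩; exact two_pow_two_pow_le_autCount n c⟩

section Tree

variable {k : ℕ}

instance : Finite (TVert k) := inferInstanceAs (Finite {l : List Bool // l.length < k})

def swapPerm (s : List Bool → Bool) : Equiv.Perm (TVert k) where
  toFun x := ⟨swapAlong s x.val, by simpa using x.2⟩
  invFun x := ⟨unswapAlong s x.val, by simpa using x.2⟩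
  left_inv x := Subtype.ext (unswapAlong_swapAlong s x.val)
  right_inv x := Subtype.ext (swapAlong_unswapAlong s x.val)

@[simp] lemma swapPerm_val (s : List Bool → Bool) (x : TVert k) :
    (swapPerm s x).val = swapAlong s x.val := rfl

lemma tAdj_swapPerm {s : List Bool → Bool} {x y : TVert k} (h : TAdj k x y) :
    TAdj k (swapPerm s x) (swapPerm s y) := by
  rcases h with ⟨b, hb⟩ | ⟨b, hb⟩
  · exact Or.inl ⟨xor b (s x.val), by simp [hb]⟩
  · exact Or.inr ⟨xor b (s y.val), by simp [hb]⟩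

lemma tAdj_iff_tAdj_swapPerm (s : List Bool → Bool) (x y : TVert k) :
    TAdj k x y ↔ TAdj k (swapPerm s x) (swapPerm s y) := by
  refine ⟨tAdj_swapPerm, fun h => ?_⟩
  have hinv (z : TVert k) : swapPerm (fun z => s (unswapAlong s z)) (swapPerm s z) = z :=
    Subtype.ext (by simp [← unswapAlong_eq_swapAlong])
  simpa only [hinv] using tAdj_swapPerm (s := fun z => s (unswapAlong s z)) h

def nbrs (x : TVert k) : Set (TVert k) := {y | TAdj k x y}

lemma ncard_nbrs_apply {f : Equiv.Perm (TVert k)} (hf : ∀ x y, TAdj k x y ↔ TAdj k (f x) (f y))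
    (x : TVert k) : (nbrs (f x)).ncard = (nbrs x).ncard := by
  have : nbrs (f x) = f '' nbrs x := by
    ext y
    rw [f.image_eq_preimage_symm, Set.mem_preimage]
    exact (hf x (f.symm y)).trans (by rw [f.apply_symm_apply]; rfl) |>.symm
  rw [this, Set.ncard_image_of_injective _ f.injective]

lemma ne_of_val_ne {x y : TVert k} (h : x.val ≠ y.val) : x ≠ y :=
  fun hxy => h (congrArg Subtype.val hxy)

def rootVert : TVert (d + 1) := ⟨[], Nat.succ_pos d⟩

lemma ncard_nbrs_rootVert : (nbrs (rootVert : TVert (d + 2))).ncard = 2 := by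
  let child (b : Bool) : TVert (d + 2) := ⟨[b], by simp⟩
  have : nbrs rootVert = {child false, child true} := by
    ext y
    refine ⟨?_, by rintro (rfl | rfl) <;> exact Or.inl ⟨_, rfl⟩⟩
    rintro (⟨b, hb⟩ | ⟨b, hb⟩)
    · cases b
      exacts [Or.inl (Subtype.ext hb), Or.inr (Subtype.ext hb)]
    · exact (List.cons_ne_nil _ _ hb.symm).elim
  rw [this, Set.ncard_pair (ne_of_val_ne (by simp [child]))]

lemma ncard_nbrs_ne_two {x : TVert (d + 2)} (hx : x.val ≠ []) : (nbrs x).ncard ≠ 2 := by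
  obtain ⟨a, p, hp⟩ := List.exists_cons_of_ne_nil hx
  have hlen : p.length + 1 < d + 2 := by simpa [hp] using x.2
  let parent : TVert (d + 2) := ⟨p, by omega⟩
  have hparent : parent ∈ nbrs x := Or.inr ⟨a, hp⟩
  rcases Nat.lt_or_ge (p.length + 1) (d + 1) with hinner | hleaf
  · let child (b : Bool) : TVert (d + 2) := ⟨b :: x.val, by simp [hp]; omega⟩
    have hsub : {parent, child false, child true} ⊆ nbrs x := by
      rintro y (rfl | rfl | rfl)
      exacts [hparent, Or.inl ⟨false, rfl⟩, Or.inl ⟨true, rfl⟩]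
    have h3 : ({parent, child false, child true} : Set (TVert (d + 2))).ncard = 3 := by
      refine Set.ncard_eq_three.mpr ⟨_, _, _, ?_, ?_, ne_of_val_ne (by simp [child]), rfl⟩ <;>
        exact ne_of_val_ne fun h => by
          have := congrArg List.length h
          simp only [parent, child, hp, List.length_cons] at this
          omega
    have := Set.ncard_le_ncard hsub
    omega
  · have hsub : nbrs x ⊆ {parent} := by
      rintro y (⟨b, hb⟩ | ⟨b, hb⟩)
      · have := y.2
        simp only [hb, hp, List.length_cons] at this
        omega
      · rw [hp, List.cons.injEq] at hb
        exact Subtype.ext hb.2.symm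
    have := Set.ncard_le_ncard hsub
    rw [Set.ncard_singleton] at this
    omega

section AdjPerm

variable {f : Equiv.Perm (TVert (d + 1))}
  (hf : ∀ x y, TAdj (d + 1) x y ↔ TAdj (d + 1) (f x) (f y))
include hf

lemma apply_rootVert : f rootVert = rootVert := by
  cases d with
  | zero => exact Subtype.ext (List.length_eq_zero_iff.mp (Nat.lt_one_iff.mp (f rootVert).2))
  | succ d =>
    by_contra h
    apply ncard_nbrs_ne_two (x := f rootVert) fun h' => h (Subtype.ext h')
    rw [ncard_nbrs_apply hf, ncard_nbrs_rootVert]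

lemma exists_apply_cons {u : List Bool → Bool} {m : List Bool}
    (hm : ∀ h, (f ⟨m, h⟩).val = swapAlong u m)
    (hm' : ∀ h, (f ⟨m.tail, h⟩).val = swapAlong u m.tail)
    (b : Bool) (h : (b :: m).length < d + 1) :
    ∃ e, (f ⟨b :: m, h⟩).val = e :: swapAlong u m := by
  have hml : m.length < d + 1 := by simp only [List.length_cons] at h; omega
  rcases (hf ⟨b :: m, h⟩ ⟨m, hml⟩).1 (Or.inr ⟨b, rfl⟩) with ⟨e, he⟩ | ⟨e, he⟩
  · -- then `f (b :: m)` is the parent of `f m`, which is `f m.tail`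
    exfalso
    rw [hm] at he
    cases m with
    | nil => exact List.cons_ne_nil _ _ he.symm
    | cons a m' =>
      have hparent : (f ⟨m', by simp only [List.length_cons] at hml; omega⟩).val =
          swapAlong u m' := hm' _
      rw [swapAlong_cons, List.cons.injEq] at he
      have := congrArg (fun v => v.val.length) (f.injective (Subtype.ext (hparent.trans he.2)))
      simp only [List.length_cons] at this
      omega
  · exact ⟨e, by rw [he, hm]⟩

def swapsOf (f : Equiv.Perm (TVert (d + 1))) : Swaps d :=
  fun x => (f ⟨false :: x.val, by simpa using x.2⟩).val.headI

lemma apply_val_eq_swapAlong (x : TVert (d + 1)) :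
    (f x).val = swapAlong (swapsOf f).extend x.val := by
  suffices ∀ l : List Bool, (∀ h, (f ⟨l, h⟩).val = swapAlong (swapsOf f).extend l) ∧
      ∀ h, (f ⟨l.tail, h⟩).val = swapAlong (swapsOf f).extend l.tail from
    (this x.val).1 x.2
  intro l
  induction l with
  | nil =>
    have hroot (h) : (f ⟨[], h⟩).val = [] := congrArg Subtype.val (apply_rootVert hf)
    exact ⟨hroot, hroot⟩
  | cons b m ih =>
    refine ⟨fun h => ?_, ih.1⟩
    have hm : m.length < d := by simp only [List.length_cons] at h; omega
    obtain ⟨e₀, he₀⟩ := exists_apply_cons hf ih.1 ih.2 false (by simpa using hm)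
    obtain ⟨e₁, he₁⟩ := exists_apply_cons hf ih.1 ih.2 true (by simpa using hm)
    have hs : (swapsOf f).extend m = e₀ := by
      rw [Swaps.extend_of_lt _ hm, swapsOf, he₀]
      rfl
    have hne : e₁ ≠ e₀ := by
      rintro rfl
      have := congrArg Subtype.val (f.injective (Subtype.ext (he₁.trans he₀.symm)))
      simp at this
    rw [swapAlong_cons, hs]
    cases b
    · simpa using he₀
    · simpa [← Bool.eq_not_of_ne hne] using he₁

end AdjPerm

def LeafIso.toColorAut {c : List Bool → Bool} (e : LeafIso d c c) : ColorAuts (d + 1) c :=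
  ⟨swapPerm e.swaps.extend, tAdj_iff_tAdj_swapPerm _, fun x hx => e.color_swapAlong x.val hx⟩

lemma LeafIso.toColorAut_injective (c : List Bool → Bool) :
    Function.Injective (toColorAut : LeafIso d c c → ColorAuts (d + 1) c) := by
  intro e e' h
  refine LeafIso.ext (Swaps.ext_swapAlong fun l hl => ?_)
  exact congrArg Subtype.val
    (DFunLike.congr_fun (congrArg Subtype.val h) (⟨l, by omega⟩ : TVert (d + 1)))

lemma LeafIso.toColorAut_surjective (c : List Bool → Bool) :
    Function.Surjective (toColorAut : LeafIso d c c → ColorAuts (d + 1) c) := by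
  rintro ⟨f, hf, hc⟩
  have hcolor (l : List Bool) (hl : l.length = d) : c (swapAlong (swapsOf f).extend l) = c l := by
    rw [← apply_val_eq_swapAlong hf ⟨l, by omega⟩]
    exact hc ⟨l, by omega⟩ hl
  exact ⟨⟨swapsOf f, hcolor⟩,
    Subtype.ext <| Equiv.ext fun x => Subtype.ext (apply_val_eq_swapAlong hf x).symm⟩

lemma card_colorAuts (c : List Bool → Bool) : Nat.card (ColorAuts (d + 1) c) = autCount d c :=
  (Nat.card_congr (Equiv.ofBijective _
    ⟨LeafIso.toColorAut_injective c, LeafIso.toColorAut_surjective c⟩)).symm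

end Tree

end ColoredTree

theorem stmt_19 :
    IsGreatest {M : ℕ | ∀ c : List Bool → Bool, M ≤ Nat.card (ColorAuts 10 c)}
      (2 ^ 128) := by
  have hcard (c : List Bool → Bool) : Nat.card (ColorAuts 10 c) = ColoredTree.autCount 9 c :=
    ColoredTree.card_colorAuts c
  obtain ⟨⟨c₀, hc₀⟩, hmin⟩ := ColoredTree.isLeast_autCount 7
  refine ⟨fun c => (hcard c).symm ▸ hmin ⟨c, rfl⟩, fun M hM => ?_⟩
  exact (hM c₀).trans_eq ((hcard c₀).trans hc₀)
end
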